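/- Let Γ be a group generated by a finite set S not containing the identity. For every n ≥ 1, the number of simple graphs on vertex set {1,…,n} that are isomorphic to an induced subgraph of the Cayley graph Cay(Γ, S) is at most (2|S|(n+1))^{n−1}. (The class of finite induced subgraphs of a Cayley graph of a finitely generated group is small.) -/

import Mathlib

/-!
Fix an embedding `f` of `G` into the Cayley graph. In each component of `G` take a shortest-path
spanning tree rooted at the least vertex, and record for every other vertex `v` its parent `u`
together with the signed generator `s^{±1}` such that `f v = f u * s^{±1}`. This code determines
`f` on each component up to left translation; since adjacency in a Cayley graph is invariant under
left translation, it determines `G`. Vertex `0` is always a root, so only the codes of the other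
`n - 1` vertices matter, each taking one of at most `2|S|n + 1` values.
-/

/-- The Cayley graph of a group `Γ` with respect to a set `S` of generators. -/
def cayley (Γ : Type*) [Group Γ] (S : Finset Γ) : SimpleGraph Γ where
  Adj x y := x ≠ y ∧ ∃ s ∈ S, y = x * s ∨ x = y * s
  symm := ⟨by rintro x y ⟨hne, s, hs, h⟩; exact ⟨hne.symm, s, hs, h.symm⟩⟩
  loopless := ⟨fun x h => h.1 rfl⟩

namespace SimpleGraph

variable {V : Type*}

theorem Reachable.exists_adj_dist_lt {G : SimpleGraph V} {r v : V} (h : G.Reachable r v)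
    (hne : r ≠ v) : ∃ u, G.Adj u v ∧ G.dist r u < G.dist r v := by
  obtain ⟨p, hp⟩ := h.exists_walk_length_eq_dist
  have hnil : ¬p.Nil := Walk.not_nil_of_ne hne
  refine ⟨p.penultimate, p.adj_penultimate hnil, ?_⟩
  calc G.dist r p.penultimate ≤ p.dropLast.length := dist_le _
    _ < p.length := by
      rw [Walk.length_dropLast]
      exact Nat.sub_lt (Walk.not_nil_iff_lt_length.1 hnil) one_pos
    _ = G.dist r v := hp

variable (G : SimpleGraph V) [Fintype V] [LinearOrder V]

noncomputable def componentMin (v : V) : V :=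
  open scoped Classical in
  ({u | G.Reachable u v} : Finset V).min' ⟨v, by simp⟩

open scoped Classical in
theorem reachable_componentMin (v : V) : G.Reachable (G.componentMin v) v :=
  (Finset.mem_filter.1 (Finset.min'_mem ({u | G.Reachable u v} : Finset V) _)).2

open scoped Classical in
theorem componentMin_le_of_reachable {u v : V} (h : G.Reachable u v) : G.componentMin v ≤ u :=
  Finset.min'_le _ u (Finset.mem_filter.2 ⟨Finset.mem_univ u, h⟩)

theorem componentMin_eq_of_reachable {u v : V} (h : G.Reachable u v) :
    G.componentMin u = G.componentMin v :=
  le_antisymm (G.componentMin_le_of_reachable ((G.reachable_componentMin v).trans h.symm))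
    (G.componentMin_le_of_reachable ((G.reachable_componentMin u).trans h))

theorem componentMin_bot [OrderBot V] : G.componentMin ⊥ = ⊥ :=
  le_bot_iff.1 (G.componentMin_le_of_reachable Reachable.rfl)

end SimpleGraph

section Cayley

variable {Γ : Type*} [Group Γ] (S : Finset Γ)

/-- `(s, true)` stands for `s` and `(s, false)` for `s⁻¹`, as in the words of `FreeGroup`. -/
def signedGen (t : S × Bool) : Γ :=
  if t.2 then t.1 else (t.1 : Γ)⁻¹

variable {S}

theorem cayley_adj_mul_left (g : Γ) {x y : Γ} :
    (cayley Γ S).Adj (g * x) (g * y) ↔ (cayley Γ S).Adj x y := by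
  simp only [cayley, ne_eq, mul_right_inj, mul_assoc]

theorem exists_eq_mul_signedGen_of_cayley_adj {x y : Γ} (h : (cayley Γ S).Adj x y) :
    ∃ t, y = x * signedGen S t := by
  obtain ⟨-, s, hs, rfl | rfl⟩ := h
  · exact ⟨(⟨s, hs⟩, true), rfl⟩
  · exact ⟨(⟨s, hs⟩, false), by simp [signedGen]⟩

end Cayley

section ParentCode

variable {V Γ : Type*} [Fintype V] [LinearOrder V] [Group Γ] {S : Finset Γ}

variable (S) in
/-- A spanning forest of `G`, rooted at the least vertex of each component, whose edges carry the
signed generator relating the `f`-images of their endpoints: `D v` is the parent of `v`. -/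
def IsParentCode (G : SimpleGraph V) (f : V → Γ) (D : V → Option (V × S × Bool)) : Prop :=
  ∀ v, (D v = none → G.componentMin v = v) ∧
    ∀ u t, D v = some (u, t) → G.Adj u v ∧
      G.dist (G.componentMin v) u < G.dist (G.componentMin v) v ∧ f v = f u * signedGen S t

noncomputable def componentOffset (G : SimpleGraph V) (f : V → Γ) (v : V) : Γ :=
  (f (G.componentMin v))⁻¹ * f v

variable {G G₁ G₂ : SimpleGraph V} {f f₁ f₂ : V → Γ} {D : V → Option (V × S × Bool)}

theorem exists_isParentCode (hG : ∀ u v, G.Adj u v → (cayley Γ S).Adj (f u) (f v)) :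
    ∃ D, IsParentCode S G f D := by
  classical
  have hparent : ∀ v, G.componentMin v ≠ v → ∃ u t, G.Adj u v ∧
      G.dist (G.componentMin v) u < G.dist (G.componentMin v) v ∧ f v = f u * signedGen S t := by
    intro v hv
    obtain ⟨u, hadj, hlt⟩ := (G.reachable_componentMin v).exists_adj_dist_lt hv
    obtain ⟨t, ht⟩ := exists_eq_mul_signedGen_of_cayley_adj (hG u v hadj)
    exact ⟨u, t, hadj, hlt, ht⟩
  choose u t hu using hparent
  refine ⟨fun v => if hv : G.componentMin v = v then none else some (u v hv, t v hv),
    fun v => ⟨fun hD => ?_, fun u' t' hD => ?_⟩⟩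
  · by_contra hv
    simp [hv] at hD
  · dsimp only at hD
    split_ifs at hD with hv
    obtain ⟨rfl, rfl⟩ := Prod.mk.inj (Option.some.inj hD)
    exact hu v hv

theorem IsParentCode.eq_none (h : IsParentCode S G f D) {v : V} (hv : G.componentMin v = v) :
    D v = none := by
  rcases hD : D v with _ | ⟨u, t⟩
  · rfl
  · have hlt := ((h v).2 u t hD).2.1
    rw [hv, SimpleGraph.dist_self] at hlt
    exact absurd hlt (Nat.not_lt_zero _)

theorem IsParentCode.componentMin_eq_and_componentOffset_eq (h₁ : IsParentCode S G₁ f₁ D)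
    (h₂ : IsParentCode S G₂ f₂ D) (v : V) :
    G₁.componentMin v = G₂.componentMin v ∧ componentOffset G₁ f₁ v = componentOffset G₂ f₂ v := by
  induction hd : G₁.dist (G₁.componentMin v) v using Nat.strong_induction_on generalizing v with
  | _ d ih =>
    rcases hD : D v with _ | ⟨u, t⟩
    · have e₁ := (h₁ v).1 hD
      have e₂ := (h₂ v).1 hD
      simp [componentOffset, e₁, e₂]
    · obtain ⟨hadj₁, hlt, hf₁⟩ := (h₁ v).2 u t hD
      obtain ⟨hadj₂, -, hf₂⟩ := (h₂ v).2 u t hD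
      have e₁ := G₁.componentMin_eq_of_reachable hadj₁.reachable
      have e₂ := G₂.componentMin_eq_of_reachable hadj₂.reachable
      obtain ⟨hmin, hoff⟩ := ih _ (hd ▸ e₁ ▸ hlt) u rfl
      refine ⟨e₁ ▸ e₂ ▸ hmin, ?_⟩
      simp only [componentOffset] at hoff ⊢
      rw [hf₁, hf₂, ← e₁, ← e₂, ← mul_assoc, ← mul_assoc, hoff]

theorem adj_iff_componentMin_eq_and_cayley_adj
    (hG : ∀ u v, G.Adj u v ↔ (cayley Γ S).Adj (f u) (f v)) {u v : V} :
    G.Adj u v ↔ G.componentMin u = G.componentMin v ∧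
      (cayley Γ S).Adj (componentOffset G f u) (componentOffset G f v) := by
  refine ⟨fun h => ?_, fun ⟨e, h⟩ => ?_⟩
  · have e := G.componentMin_eq_of_reachable h.reachable
    refine ⟨e, ?_⟩
    rw [componentOffset, componentOffset, e, cayley_adj_mul_left]
    exact (hG u v).1 h
  · rw [componentOffset, componentOffset, e, cayley_adj_mul_left] at h
    exact (hG u v).2 h

theorem IsParentCode.eq (hG₁ : ∀ u v, G₁.Adj u v ↔ (cayley Γ S).Adj (f₁ u) (f₁ v))
    (hG₂ : ∀ u v, G₂.Adj u v ↔ (cayley Γ S).Adj (f₂ u) (f₂ v))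
    (h₁ : IsParentCode S G₁ f₁ D) (h₂ : IsParentCode S G₂ f₂ D) : G₁ = G₂ := by
  ext u v
  obtain ⟨hu, hu'⟩ := h₁.componentMin_eq_and_componentOffset_eq h₂ u
  obtain ⟨hv, hv'⟩ := h₁.componentMin_eq_and_componentOffset_eq h₂ v
  rw [adj_iff_componentMin_eq_and_cayley_adj hG₁, adj_iff_componentMin_eq_and_cayley_adj hG₂,
    hu, hv, hu', hv']

end ParentCode

theorem ncard_le_of_forall_exists_cayley_adj_iff {Γ : Type*} [Group Γ] (S : Finset Γ) {m : ℕ}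
    (A : Set (SimpleGraph (Fin (m + 1))))
    (hA : ∀ G ∈ A, ∃ f : Fin (m + 1) → Γ, ∀ u v, G.Adj u v ↔ (cayley Γ S).Adj (f u) (f v)) :
    A.ncard ≤ ((m + 1) * (2 * S.card) + 1) ^ m := by
  have hcode : ∀ G ∈ A, ∃ (f : Fin (m + 1) → Γ) (D : Fin (m + 1) → Option (Fin (m + 1) × S × Bool)),
      (∀ u v, G.Adj u v ↔ (cayley Γ S).Adj (f u) (f v)) ∧ IsParentCode S G f D := by
    intro G hG
    obtain ⟨f, hf⟩ := hA G hG
    obtain ⟨D, hD⟩ := exists_isParentCode fun u v => (hf u v).1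
    exact ⟨f, D, hf, hD⟩
  choose! f D hf hD using hcode
  -- `0` is a root, so `D G 0 = none` and only `Fin.tail (D G)` carries information.
  have hD₀ : ∀ G ∈ A, D G 0 = none := fun G hG =>
    (hD G hG).eq_none (by rw [← bot_eq_zero, G.componentMin_bot])
  have hinj : Set.InjOn (fun G => Fin.tail (D G)) A := by
    intro G₁ h₁ G₂ h₂ htail
    have hDeq : D G₁ = D G₂ := by
      rw [← Fin.cons_self_tail (D G₁), ← Fin.cons_self_tail (D G₂), hD₀ _ h₁, hD₀ _ h₂]
      exact congrArg _ htail
    exact IsParentCode.eq (hf _ h₁) (hf _ h₂) (hD _ h₁) (hDeq ▸ hD _ h₂)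
  calc A.ncard ≤ (Set.univ : Set (Fin m → Option (Fin (m + 1) × S × Bool))).ncard :=
        Set.ncard_le_ncard_of_injOn _ (fun _ _ => trivial) hinj
    _ = ((m + 1) * (2 * S.card) + 1) ^ m := by
        rw [Set.ncard_univ, Nat.card_eq_fintype_card]
        simp [Fintype.card_option]
        ring

theorem cayley_induced_subgraphs_small (Γ : Type*) [Group Γ] (S : Finset Γ)
    (hgen : Subgroup.closure (S : Set Γ) = ⊤) (n : ℕ) :
    Set.ncard {G : SimpleGraph (Fin n) | ∃ f : Fin n → Γ, Function.Injective f ∧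
        ∀ u v : Fin n, G.Adj u v ↔ (cayley Γ S).Adj (f u) (f v)} ≤
      (2 * S.card * (n + 1)) ^ (n - 1) := by
  obtain hn | hn := Nat.lt_or_ge n 2
  · have : Subsingleton (Fin n) := Fin.subsingleton_iff_le_one.2 (by omega)
    exact (Set.ncard_le_one_of_subsingleton _).trans_eq
      (by rw [Nat.sub_eq_zero_of_le (Nat.le_of_lt_succ hn), pow_zero])
  obtain ⟨m, rfl⟩ : ∃ m, n = m + 2 := ⟨n - 2, by omega⟩
  rcases S.eq_empty_or_nonempty with rfl | hS
  · have : Subsingleton Γ := Subgroup.subsingleton_iff.1 <|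
      subsingleton_of_bot_eq_top (by simpa using hgen)
    refine ((Set.ncard_eq_zero).2 (Set.eq_empty_of_forall_notMem ?_)).trans_le (Nat.zero_le _)
    rintro G ⟨f, hf, -⟩
    exact zero_ne_one (hf (Subsingleton.elim (f 0) (f 1)))
  calc _ ≤ ((m + 1 + 1) * (2 * S.card) + 1) ^ (m + 1) :=
        ncard_le_of_forall_exists_cayley_adj_iff S _ <| by rintro G ⟨f, -, hf⟩; exact ⟨f, hf⟩
    _ ≤ _ := Nat.pow_le_pow_left (by nlinarith [hS.card_pos]) _
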